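/- Let K be a field of characteristic zero with t-adic valuation val on K[[t]]. For any differential monomial E_M = Π_{i,j} x_{ij}^{M_{ij}} (M a matrix of nonnegative integers) and any φ = (φ_1,...,φ_n) ∈ K[[t]]^n, the valuation val(E_M(φ)) equals ε_M(trop(φ)) = Σ_{i,j} M_{ij} · Val_{Supp(φ_i)}(j), where Val_S(j) = min{s ∈ S : s ≥ j} − j if S ∩ Z_{≥j} ≠ ∅ and ∞ otherwise, using the convention val(0) = ∞. -/

import Mathlib

/-- Formal derivative of a power series. -/
noncomputable def pd {K : Type*} [Semiring K] (φ : PowerSeries K) : PowerSeries K :=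
  PowerSeries.mk fun k => ((k + 1 : ℕ) : K) * PowerSeries.coeff (k + 1) φ

/-- Support of a power series. -/
def suppS {K : Type*} [Semiring K] (φ : PowerSeries K) : Set ℕ :=
  {k | PowerSeries.coeff k φ ≠ 0}

/-- t-adic valuation of a power series, with value `⊤` at `0`. -/
noncomputable def pval {K : Type*} [Semiring K] (φ : PowerSeries K) : ℕ∞ :=
  sInf ((fun k : ℕ => (k : ℕ∞)) '' suppS φ)

/-- `Val_S(j) = min{s ∈ S : s ≥ j} − j`, or `⊤` if `S ∩ Z_{≥j} = ∅`. -/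
noncomputable def ValS (S : Set ℕ) (j : ℕ) : ℕ∞ :=
  sInf ((fun s : ℕ => ((s - j : ℕ) : ℕ∞)) '' {s ∈ S | j ≤ s})

/-- Tropical evaluation of the differential monomial with exponent matrix `m`:
`ε_m(S) = Σ m_{ij} · Val_{S_i}(j)`. -/
noncomputable def eps {n : ℕ} (m : (Fin n × ℕ) →₀ ℕ) (S : Fin n → Set ℕ) : ℕ∞ :=
  m.sum fun v k => (k : ℕ∞) * ValS (S v.1) v.2

/-- Value at `S` of the tropicalization of a differential polynomial:
`min over monomials m of val(ψ_m) + ε_m(S)`. -/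
noncomputable def tropVal {K : Type*} [CommSemiring K] {n : ℕ}
    (P : MvPolynomial (Fin n × ℕ) (PowerSeries K)) (S : Fin n → Set ℕ) : ℕ∞ :=
  sInf ((fun m => pval (MvPolynomial.coeff m P) + eps m S) '' (P.support : Set ((Fin n × ℕ) →₀ ℕ)))

/-- `S` is a solution of `trop(P)`: the minimum is `⊤` or is attained at two distinct monomials. -/
noncomputable def isTropSol {K : Type*} [CommSemiring K] {n : ℕ}
    (P : MvPolynomial (Fin n × ℕ) (PowerSeries K)) (S : Fin n → Set ℕ) : Prop :=
  tropVal P S = ⊤ ∨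
    ∃ m₁ ∈ P.support, ∃ m₂ ∈ P.support, m₁ ≠ m₂ ∧
      pval (MvPolynomial.coeff m₁ P) + eps m₁ S = tropVal P S ∧
      pval (MvPolynomial.coeff m₂ P) + eps m₂ S = tropVal P S

/-- The derivation on the ring of differential polynomials `R{x_1,…,x_n}`,
extending the derivation `d` on `R`, with `d(x_{ij}) = x_{i(j+1)}`. -/
noncomputable def dPoly {R : Type*} [CommRing R] (d : R → R) {n : ℕ}
    (P : MvPolynomial (Fin n × ℕ) R) : MvPolynomial (Fin n × ℕ) R :=
  (∑ m ∈ P.support, MvPolynomial.monomial m (d (MvPolynomial.coeff m P))) +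
    ∑ v ∈ P.vars, MvPolynomial.X (v.1, v.2 + 1) * MvPolynomial.pderiv v P

/-- Evaluation of a differential polynomial at a tuple of power series:
substitute `x_{ij} ↦ d^j φ_i`. -/
noncomputable def evalDP {K : Type*} [CommRing K] {n : ℕ} (φ : Fin n → PowerSeries K)
    (P : MvPolynomial (Fin n × ℕ) (PowerSeries K)) : PowerSeries K :=
  MvPolynomial.eval (fun v => pd^[v.2] (φ v.1)) P

/-- The bijection `Ψ : K^{Z≥0} → K[[t]]`, `Ψ(a) = Σ a_j t^j / j!`. -/
noncomputable def Psi {K : Type*} [Field K] (a : ℕ → K) : PowerSeries K :=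
  PowerSeries.mk fun j => a j / (j.factorial : K)

/-- The Zariski topology on affine `N`-space over `K`. -/
def zariskiT (N : ℕ) (K : Type*) [CommRing K] : TopologicalSpace (Fin N → K) :=
  TopologicalSpace.generateFrom
    {U | ∃ p : MvPolynomial (Fin N) K, U = {x | MvPolynomial.eval x p ≠ 0}}

/-- A constructible set: a finite union of locally closed sets. -/
def IsConstructibleIn {X : Type*} (τ : TopologicalSpace X) (C : Set X) : Prop :=
  ∃ (r : ℕ) (U Z : Fin r → Set X),
    (∀ i, @IsOpen X τ (U i)) ∧ (∀ i, @IsClosed X τ (Z i)) ∧ C = ⋃ i, U i ∩ Z i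

/-!
Since `K[[t]]` is a domain, `val` turns the product `E_M(φ)` into the sum
`Σ M_{ij} · val(d^j φ_i)`. In characteristic zero `d^j` multiplies the coefficient of `t^(k+j)`
by `(k+1)⋯(k+j) ≠ 0` and moves it to `t^k`, so `Supp(d^j φ) = (Supp φ - j) ∩ Z_{≥0}`, whose
minimum is `Val_{Supp φ}(j)`.
-/

open PowerSeries

lemma ValS_eq_sInf_preimage_add (S : Set ℕ) (j : ℕ) :
    ValS S j = sInf ((fun k : ℕ => (k : ℕ∞)) '' ((· + j) ⁻¹' S)) := by
  unfold ValS
  congr 1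
  ext x
  constructor
  · rintro ⟨s, ⟨hs, hjs⟩, rfl⟩
    exact ⟨s - j, by simpa [Nat.sub_add_cancel hjs], rfl⟩
  · rintro ⟨k, hk, rfl⟩
    exact ⟨k + j, ⟨hk, Nat.le_add_left j k⟩, by simp⟩

section Semiring

variable {K : Type*} [Semiring K]

lemma pval_eq_order (φ : K⟦X⟧) : pval φ = φ.order := by
  refine le_antisymm ?_ (le_sInf ?_)
  · rcases eq_or_ne φ 0 with rfl | hφ
    · simp
    · rw [← coe_toNat_order hφ]
      exact sInf_le ⟨_, coeff_order hφ, rfl⟩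
  · rintro _ ⟨k, hk, rfl⟩
    exact order_le k hk

variable [NoZeroDivisors K] [CharZero K]

lemma suppS_pd (φ : K⟦X⟧) : suppS (pd φ) = (· + 1) ⁻¹' suppS φ := by
  ext k
  simp only [suppS, pd, coeff_mk, Set.mem_ofPred_eq, Set.mem_preimage]
  exact mul_ne_zero_iff_left (Nat.cast_ne_zero.mpr k.succ_ne_zero)

lemma suppS_pd_iterate (φ : K⟦X⟧) (j : ℕ) :
    suppS (pd^[j] φ) = (· + j) ⁻¹' suppS φ := by
  induction j generalizing φ with
  | zero => rfl
  | succ j ih =>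
    rw [Function.iterate_succ_apply, ih, suppS_pd, ← Set.preimage_comp]
    simp only [Function.comp_def, add_assoc]

lemma pval_pd_iterate (φ : K⟦X⟧) (j : ℕ) : pval (pd^[j] φ) = ValS (suppS φ) j := by
  rw [ValS_eq_sInf_preimage_add, ← suppS_pd_iterate]
  rfl

end Semiring

/-- `val(E_M(φ)) = ε_M(trop(φ))`. -/
theorem stmt5 {K : Type*} [Field K] [CharZero K] {n : ℕ}
    (M : (Fin n × ℕ) →₀ ℕ) (φ : Fin n → PowerSeries K) :
    pval (M.prod fun v k => (pd^[v.2] (φ v.1)) ^ k) =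
      eps M (fun i => suppS (φ i)) := by
  rw [Finsupp.prod, pval_eq_order, order_prod, eps, Finsupp.sum]
  refine Finset.sum_congr rfl fun v _ => ?_
  rw [order_pow, ← pval_eq_order, pval_pd_iterate, nsmul_eq_mul]
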